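/- arXiv:2007.14684 — 2 statements merged into one kernel-verified Lean document; each statement's English description precedes it below -/
import Mathlib

section
/- Let d ≥ 1, ν > 0, and for a = 0,1 let σ_a > 0, α_a > 0 be such that σ₀²/α₀^{2ν} = σ₁²/α₁^{2ν}. Then for d ≤ 3, ∫_{ℝ^d} (1+‖λ‖)^{4ν+2d} ( σ₀² M̂_{ν,α₀}(‖λ‖) − σ₁² M̂_{ν,α₁}(‖λ‖) )² dλ < ∞, where M̂_{ν,α}(z) = (Γ(ν+d/2)/(π^{d/2}Γ(ν))) α^d (1+α²z²)^{−ν−d/2}. -/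
/-!
Both spectral densities have the form `C · (σ²/α^{2ν}) · (α⁻² + z²)^{-t}` with `t = ν + d/2`, so
equal microergodic parameters leave only the difference of `x ↦ x^{-t}` at the two points
`α₀⁻² + z²` and `α₁⁻² + z²`. By the mean value theorem this difference is `O((1 + z)^{-2t-2})`,
one order better than each term; squared and multiplied by the weight `(1 + z)^{4t}` it is
`O((1 + z)^{-4})`, which is integrable on `ℝ^d` exactly when `d < 4`.
-/

open MeasureTheory

lemma abs_rpow_neg_sub_rpow_neg_le {s m a b : ℝ} (hs : 0 < s) (hm : 0 < m) (ha : m ≤ a)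
    (hb : m ≤ b) : |a ^ (-s) - b ^ (-s)| ≤ s * m ^ (-(s + 1)) * |a - b| := by
  have hderiv : ∀ x ∈ Set.Ici m, HasDerivAt (fun x : ℝ => x ^ (-s)) (-s * x ^ (-s - 1)) x :=
    fun x hx => Real.hasDerivAt_rpow_const (Or.inl (hm.trans_le hx).ne')
  have hbound : ∀ x ∈ Set.Ici m, ‖-s * x ^ (-s - 1)‖ ≤ s * m ^ (-(s + 1)) := by
    intro x hx
    rw [norm_mul, Real.norm_of_nonpos (by linarith), neg_neg,
      Real.norm_of_nonneg (Real.rpow_nonneg (hm.le.trans hx) _), neg_add']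
    exact mul_le_mul_of_nonneg_left (Real.rpow_le_rpow_of_nonpos hm hx (by linarith)) hs.le
  simpa only [Real.norm_eq_abs, abs_sub_comm] using
    (convex_Ici m).norm_image_sub_le_of_norm_hasDerivWithin_le
      (fun x hx => (hderiv x hx).hasDerivWithinAt) hbound hb ha

lemma min_one_div_two_mul_one_add_sq_le {m z : ℝ} (hm : 0 ≤ m) :
    min m 1 / 2 * (1 + z) ^ 2 ≤ m + z ^ 2 := by
  have h₁ : (1 + z) ^ 2 ≤ 2 * (1 + z ^ 2) := by nlinarith [sq_nonneg (1 - z)]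
  have h₂ : min m 1 * (1 + z ^ 2) ≤ m + z ^ 2 := by
    rcases min_cases m 1 with ⟨h, hm1⟩ | ⟨h, hm1⟩ <;> rw [h] <;> nlinarith [sq_nonneg z]
  nlinarith [le_min hm zero_le_one]

lemma one_add_rpow_mul_sq_rpow_neg_sub_rpow_neg_le {t a b z : ℝ} (ht : 0 < t) (ha : 0 < a)
    (hb : 0 < b) (hz : 0 ≤ z) :
    (1 + z) ^ (4 * t) * ((a + z ^ 2) ^ (-t) - (b + z ^ 2) ^ (-t)) ^ 2 ≤
      (t * |a - b|) ^ 2 * (min (min a b) 1 / 2) ^ (-(2 * t + 2)) * (1 + z) ^ (-4 : ℝ) := by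
  set m := min a b
  have hm : 0 < m := lt_min ha hb
  have hmz : 0 < m + z ^ 2 := by positivity
  have hμ : 0 < min m 1 / 2 := half_pos (lt_min hm one_pos)
  have hdiff : |(a + z ^ 2) ^ (-t) - (b + z ^ 2) ^ (-t)| ≤
      t * |a - b| * (m + z ^ 2) ^ (-(t + 1)) := by
    have := abs_rpow_neg_sub_rpow_neg_le ht hmz
      (by linarith [min_le_left a b] : m + z ^ 2 ≤ a + z ^ 2)
      (by linarith [min_le_right a b] : m + z ^ 2 ≤ b + z ^ 2)
    rwa [add_sub_add_right_eq_sub, mul_right_comm] at this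
  have hcompare : (m + z ^ 2) ^ (-(2 * t + 2)) ≤
      (min m 1 / 2) ^ (-(2 * t + 2)) * (1 + z) ^ (-(4 * t + 4)) := by
    calc (m + z ^ 2) ^ (-(2 * t + 2))
        ≤ (min m 1 / 2 * (1 + z) ^ 2) ^ (-(2 * t + 2)) :=
          Real.rpow_le_rpow_of_nonpos (mul_pos hμ (by positivity))
            (min_one_div_two_mul_one_add_sq_le hm.le) (by linarith)
      _ = (min m 1 / 2) ^ (-(2 * t + 2)) * (1 + z) ^ (-(4 * t + 4)) := by
          rw [Real.mul_rpow (by positivity) (by positivity),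
            ← Real.rpow_natCast_mul (by positivity)]
          ring_nf
  calc (1 + z) ^ (4 * t) * ((a + z ^ 2) ^ (-t) - (b + z ^ 2) ^ (-t)) ^ 2
      ≤ (1 + z) ^ (4 * t) * (t * |a - b| * (m + z ^ 2) ^ (-(t + 1))) ^ 2 :=
        mul_le_mul_of_nonneg_left (sq_le_sq' (abs_le.mp hdiff).1 (abs_le.mp hdiff).2)
          (by positivity)
    _ = (1 + z) ^ (4 * t) * ((t * |a - b|) ^ 2 * (m + z ^ 2) ^ (-(2 * t + 2))) := by
        rw [mul_pow, ← Real.rpow_mul_natCast hmz.le]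
        ring_nf
    _ ≤ (1 + z) ^ (4 * t) * ((t * |a - b|) ^ 2 *
          ((min m 1 / 2) ^ (-(2 * t + 2)) * (1 + z) ^ (-(4 * t + 4)))) := by gcongr
    _ = (t * |a - b|) ^ 2 * (min m 1 / 2) ^ (-(2 * t + 2)) *
          ((1 + z) ^ (4 * t) * (1 + z) ^ (-(4 * t + 4))) := by ring
    _ = _ := by rw [← Real.rpow_add (by positivity)]; ring_nf

lemma sq_mul_matern_eq_microergodic_mul {σ α C ν x : ℝ} (d : ℕ) (hα : 0 < α) (hx : 0 ≤ x) :
    σ ^ 2 * (C * α ^ d * (1 + α ^ 2 * x) ^ (-ν - d / 2)) =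
      C * (σ ^ 2 / α ^ (2 * ν)) * ((α ^ 2)⁻¹ + x) ^ (-(ν + d / 2)) := by
  have hscale : 1 + α ^ 2 * x = α ^ 2 * ((α ^ 2)⁻¹ + x) := by field_simp
  have hpow : α ^ d * (α ^ 2) ^ (-(ν + d / 2)) = (α ^ (2 * ν))⁻¹ := by
    rw [← Real.rpow_natCast, ← Real.rpow_natCast_mul hα.le, ← Real.rpow_add hα,
      ← Real.rpow_neg hα.le]
    ring_nf
  rw [show -ν - d / 2 = -(ν + d / 2) by ring, hscale, Real.mul_rpow (by positivity) (by positivity),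
    div_eq_mul_inv (σ ^ 2), ← hpow]
  ring

theorem stmt10_general (d : ℕ) (hd3 : d ≤ 3) (ν : ℝ) (hν : 0 < ν)
    (σ₀ σ₁ α₀ α₁ : ℝ) (hα₀ : 0 < α₀) (hα₁ : 0 < α₁)
    (hmicro : σ₀ ^ 2 / α₀ ^ (2 * ν) = σ₁ ^ 2 / α₁ ^ (2 * ν)) :
    Integrable (fun lam : EuclideanSpace ℝ (Fin d) =>
      (1 + ‖lam‖) ^ (4 * ν + 2 * d) *
        (σ₀ ^ 2 * (Real.Gamma (ν + d / 2) / (Real.pi ^ ((d : ℝ) / 2) * Real.Gamma ν) *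
            α₀ ^ (d : ℕ) * (1 + α₀ ^ 2 * ‖lam‖ ^ 2) ^ (-ν - d / 2)) -
         σ₁ ^ 2 * (Real.Gamma (ν + d / 2) / (Real.pi ^ ((d : ℝ) / 2) * Real.Gamma ν) *
            α₁ ^ (d : ℕ) * (1 + α₁ ^ 2 * ‖lam‖ ^ 2) ^ (-ν - d / 2))) ^ 2) := by
  set C := Real.Gamma (ν + d / 2) / (Real.pi ^ ((d : ℝ) / 2) * Real.Gamma ν)
  set t : ℝ := ν + d / 2
  have ht : 0 < t := by positivity
  set D := (t * |(α₀ ^ 2)⁻¹ - (α₁ ^ 2)⁻¹|) ^ 2 *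
    (min (min (α₀ ^ 2)⁻¹ (α₁ ^ 2)⁻¹) 1 / 2) ^ (-(2 * t + 2))
  have hdim : (Module.finrank ℝ (EuclideanSpace ℝ (Fin d)) : ℝ) < 4 := by
    rw [finrank_euclideanSpace_fin]
    exact_mod_cast (by omega : d < 4)
  refine ((integrable_one_add_norm hdim).const_mul ((C * (σ₁ ^ 2 / α₁ ^ (2 * ν))) ^ 2 * D)).mono'
    (by fun_prop) (Filter.Eventually.of_forall fun lam => ?_)
  have hz := norm_nonneg lam
  rw [sq_mul_matern_eq_microergodic_mul d hα₀ (sq_nonneg _),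
    sq_mul_matern_eq_microergodic_mul d hα₁ (sq_nonneg _), hmicro, ← mul_sub,
    Real.norm_of_nonneg (by positivity), show 4 * ν + 2 * d = 4 * t by ring]
  calc _ = (C * (σ₁ ^ 2 / α₁ ^ (2 * ν))) ^ 2 * ((1 + ‖lam‖) ^ (4 * t) *
        (((α₀ ^ 2)⁻¹ + ‖lam‖ ^ 2) ^ (-t) - ((α₁ ^ 2)⁻¹ + ‖lam‖ ^ 2) ^ (-t)) ^ 2) := by ring
    _ ≤ (C * (σ₁ ^ 2 / α₁ ^ (2 * ν))) ^ 2 * (D * (1 + ‖lam‖) ^ (-4 : ℝ)) :=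
        mul_le_mul_of_nonneg_left (one_add_rpow_mul_sq_rpow_neg_sub_rpow_neg_le ht
          (by positivity) (by positivity) hz) (sq_nonneg _)
    _ = _ := by ring

/-- If the microergodic parameters match, `σ₀²/α₀^{2ν} = σ₁²/α₁^{2ν}`, then for `d ≤ 3`
the weighted squared difference of the two Matérn spectral densities is integrable. -/
theorem stmt10 (d : ℕ) (hd1 : 1 ≤ d) (hd3 : d ≤ 3) (ν : ℝ) (hν : 0 < ν)
    (σ₀ σ₁ α₀ α₁ : ℝ) (hσ₀ : 0 < σ₀) (hσ₁ : 0 < σ₁) (hα₀ : 0 < α₀) (hα₁ : 0 < α₁)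
    (hmicro : σ₀ ^ 2 / α₀ ^ (2 * ν) = σ₁ ^ 2 / α₁ ^ (2 * ν)) :
    Integrable (fun lam : EuclideanSpace ℝ (Fin d) =>
      (1 + ‖lam‖) ^ (4 * ν + 2 * d) *
        (σ₀ ^ 2 * (Real.Gamma (ν + d / 2) / (Real.pi ^ ((d : ℝ) / 2) * Real.Gamma ν) *
            α₀ ^ (d : ℕ) * (1 + α₀ ^ 2 * ‖lam‖ ^ 2) ^ (-ν - d / 2)) -
         σ₁ ^ 2 * (Real.Gamma (ν + d / 2) / (Real.pi ^ ((d : ℝ) / 2) * Real.Gamma ν) *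
            α₁ ^ (d : ℕ) * (1 + α₁ ^ 2 * ‖lam‖ ^ 2) ^ (-ν - d / 2))) ^ 2) :=
  stmt10_general d hd3 ν hν σ₀ σ₁ α₀ α₁ hα₀ hα₁ hmicro
end

section
/- Let d ∈ {1,2,3}, κ ≥ 0, μ > d + 1/2 + κ, and suppose the scalar bounds c̃(1+z)^{−(d+1+2κ)} ≤ Ŵ_{μ,κ,β}(z) ≤ c̃'(1+z)^{−(d+1+2κ)} hold for each β ∈ {β₁₁, β₂₂, β₁₂} with constants 0 < c̃ < c̃' depending on β. Define the bivariate spectral matrix F(λ) with F_{ij}(λ) = ρ_{ij}σ_{ii}σ_{jj} Ŵ_{μ,κ,β_{ij}}(‖λ‖), ρ₁₁ = ρ₂₂ = 1, σ₁₁, σ₂₂ > 0. If ρ₁₂² < inf_{z≥0} Ŵ_{μ,κ,β₁₁}(z) Ŵ_{μ,κ,β₂₂}(z) / Ŵ_{μ,κ,β₁₂}(z)², then there exist 0 < c < c' < ∞ with c(1+‖λ‖)^{−(d+1+2κ)} I₂ ≤ F(λ) ≤ c'(1+‖λ‖)^{−(d+1+2κ)} I₂ for all λ ∈ ℝ^d.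 -/
/-!
Write `t = (1 + ‖λ‖)^(-(d+1+2κ))`. The hypotheses make every entry of the spectral matrix
`Θ(t)`, and the gap `ρ₁₂² < r`, with `r` the infimum, bounds its determinant below by a multiple
of `t²`, since `W₁₁ W₂₂ - ρ₁₂² W₁₂² ≥ (r - ρ₁₂²) W₁₂²`. For a symmetric `2 × 2` matrix with
diagonal in `[k t, K t]`, off-diagonal entry at most `K t` in absolute value and determinant at
least `δ t²`, subtracting `c t I` with `c = min k (δ / 2K)` keeps the diagonal and the
determinant nonnegative, while `2 K t I` dominates it diagonally.
-/

open Matrix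

namespace Matrix

theorem posSemidef_fin_two_of_sq_le {a b e : ℝ} (ha : 0 ≤ a) (he : 0 ≤ e) (hdet : b ^ 2 ≤ a * e) :
    (!![a, b; b, e] : Matrix (Fin 2) (Fin 2) ℝ).PosSemidef := by
  rw [posSemidef_iff_dotProduct_mulVec]
  refine ⟨by ext i j; fin_cases i <;> fin_cases j <;> rfl, fun x => ?_⟩
  simp only [dotProduct, mulVec, Fin.sum_univ_two, cons_val_zero, cons_val_one,
    of_apply, Pi.star_apply, star_trivial]
  rcases ha.eq_or_lt with rfl | ha
  · obtain rfl : b = 0 := by nlinarith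
    nlinarith [sq_nonneg (x 1)]
  · -- `a` times the quadratic form is `(a x₀ + b x₁)² + (a e - b²) x₁²`.
    nlinarith [sq_nonneg (a * x 0 + b * x 1), mul_nonneg (sub_nonneg.2 hdet) (sq_nonneg (x 1))]

theorem posSemidef_fin_two_sub_smul_one {a b e c : ℝ} (hca : c ≤ a) (hce : c ≤ e)
    (hdet : c * (a + e) ≤ a * e - b ^ 2) :
    ((!![a, b; b, e] : Matrix (Fin 2) (Fin 2) ℝ) - c • 1).PosSemidef := by
  have h : (!![a, b; b, e] : Matrix (Fin 2) (Fin 2) ℝ) - c • 1 = !![a - c, b; b, e - c] := by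
    ext i j; fin_cases i <;> fin_cases j <;> simp
  rw [h]
  exact posSemidef_fin_two_of_sq_le (sub_nonneg.2 hca) (sub_nonneg.2 hce)
    (by nlinarith [sq_nonneg c])

theorem posSemidef_smul_one_sub_fin_two {a b e c : ℝ} (hac : a + |b| ≤ c) (hec : e + |b| ≤ c) :
    (c • 1 - (!![a, b; b, e] : Matrix (Fin 2) (Fin 2) ℝ)).PosSemidef := by
  have h : c • 1 - (!![a, b; b, e] : Matrix (Fin 2) (Fin 2) ℝ) = !![c - a, -b; -b, c - e] := by
    ext i j; fin_cases i <;> fin_cases j <;> simp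
  rw [h]
  have hb := abs_nonneg b
  refine posSemidef_fin_two_of_sq_le (by linarith) (by linarith) ?_
  rw [neg_sq, ← sq_abs]
  nlinarith

theorem exists_loewner_sandwich_fin_two {X : Type*} (t A B E : X → ℝ) {k K δ : ℝ}
    (hk : 0 < k) (hkK : k ≤ K) (hδ : 0 < δ) (ht : ∀ x, 0 < t x)
    (hA : ∀ x, k * t x ≤ A x ∧ A x ≤ K * t x) (hE : ∀ x, k * t x ≤ E x ∧ E x ≤ K * t x)
    (hB : ∀ x, |B x| ≤ K * t x) (hdet : ∀ x, δ * t x ^ 2 ≤ A x * E x - B x ^ 2) :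
    ∃ c c' : ℝ, 0 < c ∧ c < c' ∧ ∀ x,
      (!![A x, B x; B x, E x] - (c * t x) • (1 : Matrix (Fin 2) (Fin 2) ℝ)).PosSemidef ∧
      ((c' * t x) • (1 : Matrix (Fin 2) (Fin 2) ℝ) - !![A x, B x; B x, E x]).PosSemidef := by
  have hK : 0 < K := hk.trans_le hkK
  set c := min k (δ / (2 * K))
  have hc : 0 < c := lt_min hk (by positivity)
  refine ⟨c, 2 * K, hc, by linarith [min_le_left k (δ / (2 * K))], fun x => ⟨?_, ?_⟩⟩
  · obtain ⟨hAk, hAK⟩ := hA x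
    obtain ⟨hEk, hEK⟩ := hE x
    have hct : c * t x ≤ k * t x := mul_le_mul_of_nonneg_right (min_le_left _ _) (ht x).le
    refine posSemidef_fin_two_sub_smul_one (hct.trans hAk) (hct.trans hEk) ?_
    have htx := ht x
    have hkt := mul_pos hk htx
    calc c * t x * (A x + E x) ≤ δ / (2 * K) * t x * (2 * K * t x) :=
          mul_le_mul (by gcongr; exact min_le_right _ _) (by linarith) (by linarith) (by positivity)
      _ = δ * t x ^ 2 := by field_simp
      _ ≤ A x * E x - B x ^ 2 := hdet x
  · exact posSemidef_smul_one_sub_fin_two (by linarith [hA x, hB x]) (by linarith [hE x, hB x])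

end Matrix

theorem exists_loewner_sandwich_bivariate {X : Type*} (t W₁₁ W₂₂ W₁₂ : X → ℝ)
    {σ₁₁ σ₂₂ ρ₁₂ r a₁ a₁' a₂ a₂' a₃ a₃' : ℝ} (hσ₁₁ : 0 < σ₁₁) (hσ₂₂ : 0 < σ₂₂)
    (hρ : ρ₁₂ ^ 2 < r) (ht : ∀ x, 0 < t x) (ha₁ : 0 < a₁) (ha₁' : a₁ ≤ a₁') (ha₂ : 0 < a₂)
    (ha₃ : 0 < a₃) (hW₁₁ : ∀ x, a₁ * t x ≤ W₁₁ x ∧ W₁₁ x ≤ a₁' * t x)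
    (hW₂₂ : ∀ x, a₂ * t x ≤ W₂₂ x ∧ W₂₂ x ≤ a₂' * t x)
    (hW₁₂ : ∀ x, a₃ * t x ≤ W₁₂ x ∧ W₁₂ x ≤ a₃' * t x)
    (hgap : ∀ x, r * W₁₂ x ^ 2 ≤ W₁₁ x * W₂₂ x) :
    ∃ c c' : ℝ, 0 < c ∧ c < c' ∧ ∀ x,
      (!![σ₁₁ * σ₁₁ * W₁₁ x, ρ₁₂ * σ₁₁ * σ₂₂ * W₁₂ x; ρ₁₂ * σ₁₁ * σ₂₂ * W₁₂ x, σ₂₂ * σ₂₂ * W₂₂ x] -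
        (c * t x) • (1 : Matrix (Fin 2) (Fin 2) ℝ)).PosSemidef ∧
      ((c' * t x) • (1 : Matrix (Fin 2) (Fin 2) ℝ) -
        !![σ₁₁ * σ₁₁ * W₁₁ x, ρ₁₂ * σ₁₁ * σ₂₂ * W₁₂ x;
          ρ₁₂ * σ₁₁ * σ₂₂ * W₁₂ x, σ₂₂ * σ₂₂ * W₂₂ x]).PosSemidef := by
  have hs₁ : 0 < σ₁₁ * σ₁₁ := mul_pos hσ₁₁ hσ₁₁
  have hs₂ : 0 < σ₂₂ * σ₂₂ := mul_pos hσ₂₂ hσ₂₂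
  have hr : 0 < r - ρ₁₂ ^ 2 := sub_pos.2 hρ
  set k := min (σ₁₁ * σ₁₁ * a₁) (σ₂₂ * σ₂₂ * a₂)
  set K := max (max (σ₁₁ * σ₁₁ * a₁') (σ₂₂ * σ₂₂ * a₂')) (|ρ₁₂| * σ₁₁ * σ₂₂ * a₃')
  have hdiag {W : X → ℝ} {s a a' : ℝ} (hs : 0 ≤ s) (hk : k ≤ s * a) (hK : s * a' ≤ K)
      (hW : ∀ x, a * t x ≤ W x ∧ W x ≤ a' * t x) (x : X) :
      k * t x ≤ s * W x ∧ s * W x ≤ K * t x := by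
    have htx := (ht x).le
    constructor
    · nlinarith [mul_le_mul_of_nonneg_left (hW x).1 hs, mul_le_mul_of_nonneg_right hk htx]
    · nlinarith [mul_le_mul_of_nonneg_left (hW x).2 hs, mul_le_mul_of_nonneg_right hK htx]
  refine exists_loewner_sandwich_fin_two t _ _ _
    (δ := σ₁₁ * σ₁₁ * (σ₂₂ * σ₂₂) * (r - ρ₁₂ ^ 2) * a₃ ^ 2) (lt_min (by positivity) (by positivity))
    ((min_le_left _ _).trans <| (mul_le_mul_of_nonneg_left ha₁' hs₁.le).trans <|
      (le_max_left _ _).trans (le_max_left _ _))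
    (by positivity) ht
    (hdiag hs₁.le (min_le_left _ _) ((le_max_left _ _).trans (le_max_left _ _)) hW₁₁)
    (hdiag hs₂.le (min_le_right _ _) ((le_max_right _ _).trans (le_max_left _ _)) hW₂₂)
    (fun x => ?_) (fun x => ?_)
  · have hW : 0 < W₁₂ x := (mul_pos ha₃ (ht x)).trans_le (hW₁₂ x).1
    calc |ρ₁₂ * σ₁₁ * σ₂₂ * W₁₂ x| = |ρ₁₂| * σ₁₁ * σ₂₂ * W₁₂ x := by
          rw [abs_mul, abs_mul, abs_mul, abs_of_pos hσ₁₁, abs_of_pos hσ₂₂, abs_of_pos hW]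
      _ ≤ |ρ₁₂| * σ₁₁ * σ₂₂ * a₃' * t x := by rw [mul_assoc _ a₃']; gcongr; exact (hW₁₂ x).2
      _ ≤ K * t x := by gcongr; exacts [(ht x).le, le_max_right _ _]
  · calc σ₁₁ * σ₁₁ * (σ₂₂ * σ₂₂) * (r - ρ₁₂ ^ 2) * a₃ ^ 2 * t x ^ 2
        = σ₁₁ * σ₁₁ * (σ₂₂ * σ₂₂) * (r - ρ₁₂ ^ 2) * (a₃ * t x) ^ 2 := by ring
      _ ≤ σ₁₁ * σ₁₁ * (σ₂₂ * σ₂₂) * (r - ρ₁₂ ^ 2) * W₁₂ x ^ 2 := by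
          gcongr; exacts [(mul_pos ha₃ (ht x)).le, (hW₁₂ x).1]
      _ ≤ σ₁₁ * σ₁₁ * (σ₂₂ * σ₂₂) * (W₁₁ x * W₂₂ x - ρ₁₂ ^ 2 * W₁₂ x ^ 2) := by
          linarith [mul_le_mul_of_nonneg_left (hgap x) (mul_pos hs₁ hs₂).le]
      _ = _ := by ring

theorem ciInf_Ici_mul_sq_le {f g h : ℝ → ℝ} (hf : ∀ z, 0 ≤ z → 0 ≤ f z)
    (hg : ∀ z, 0 ≤ z → 0 ≤ g z) {z : ℝ} (hz : 0 ≤ z) (hhz : 0 < h z) :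
    (⨅ y : Set.Ici (0 : ℝ), f y * g y / h y ^ 2) * h z ^ 2 ≤ f z * g z := by
  have hbdd : BddBelow (Set.range fun y : Set.Ici (0 : ℝ) => f y * g y / h y ^ 2) :=
    ⟨0, by rintro _ ⟨y, rfl⟩; exact div_nonneg (mul_nonneg (hf y y.2) (hg y y.2)) (sq_nonneg _)⟩
  exact (le_div_iff₀ (by positivity)).1 (ciInf_le hbdd ⟨z, hz⟩)

theorem stmt17_general (d : ℕ) (κ : ℝ) (σ₁₁ σ₂₂ ρ₁₂ : ℝ) (hσ₁₁ : 0 < σ₁₁) (hσ₂₂ : 0 < σ₂₂)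
    (W₁₁ W₂₂ W₁₂ : ℝ → ℝ)
    (hW₁₁ : ∃ c c' : ℝ, 0 < c ∧ c < c' ∧ ∀ z : ℝ, 0 ≤ z →
      c * (1 + z) ^ (-(d + 1 + 2 * κ)) ≤ W₁₁ z ∧ W₁₁ z ≤ c' * (1 + z) ^ (-(d + 1 + 2 * κ)))
    (hW₂₂ : ∃ c c' : ℝ, 0 < c ∧ c < c' ∧ ∀ z : ℝ, 0 ≤ z →
      c * (1 + z) ^ (-(d + 1 + 2 * κ)) ≤ W₂₂ z ∧ W₂₂ z ≤ c' * (1 + z) ^ (-(d + 1 + 2 * κ)))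
    (hW₁₂ : ∃ c c' : ℝ, 0 < c ∧ c < c' ∧ ∀ z : ℝ, 0 ≤ z →
      c * (1 + z) ^ (-(d + 1 + 2 * κ)) ≤ W₁₂ z ∧ W₁₂ z ≤ c' * (1 + z) ^ (-(d + 1 + 2 * κ)))
    (hcond : ρ₁₂ ^ 2 < ⨅ z : Set.Ici (0 : ℝ),
      W₁₁ (z : ℝ) * W₂₂ (z : ℝ) / W₁₂ (z : ℝ) ^ 2) :
    ∃ c c' : ℝ, 0 < c ∧ c < c' ∧ ∀ lam : EuclideanSpace ℝ (Fin d),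
      ((!![σ₁₁ * σ₁₁ * W₁₁ ‖lam‖, ρ₁₂ * σ₁₁ * σ₂₂ * W₁₂ ‖lam‖;
          ρ₁₂ * σ₁₁ * σ₂₂ * W₁₂ ‖lam‖, σ₂₂ * σ₂₂ * W₂₂ ‖lam‖] : Matrix (Fin 2) (Fin 2) ℝ) -
        (c * (1 + ‖lam‖) ^ (-(d + 1 + 2 * κ))) • (1 : Matrix (Fin 2) (Fin 2) ℝ)).PosSemidef ∧
      ((c' * (1 + ‖lam‖) ^ (-(d + 1 + 2 * κ))) • (1 : Matrix (Fin 2) (Fin 2) ℝ) -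
        !![σ₁₁ * σ₁₁ * W₁₁ ‖lam‖, ρ₁₂ * σ₁₁ * σ₂₂ * W₁₂ ‖lam‖;
          ρ₁₂ * σ₁₁ * σ₂₂ * W₁₂ ‖lam‖, σ₂₂ * σ₂₂ * W₂₂ ‖lam‖]).PosSemidef := by
  obtain ⟨a₁, a₁', ha₁, ha₁', hW₁₁⟩ := hW₁₁
  obtain ⟨a₂, a₂', ha₂, -, hW₂₂⟩ := hW₂₂
  obtain ⟨a₃, a₃', ha₃, -, hW₁₂⟩ := hW₁₂
  have ht (z : ℝ) (hz : 0 ≤ z) : 0 < (1 + z) ^ (-(d + 1 + 2 * κ) : ℝ) :=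
    Real.rpow_pos_of_pos (by linarith) _
  have hgap (z : ℝ) (hz : 0 ≤ z) :
      (⨅ y : Set.Ici (0 : ℝ), W₁₁ y * W₂₂ y / W₁₂ y ^ 2) * W₁₂ z ^ 2 ≤ W₁₁ z * W₂₂ z :=
    ciInf_Ici_mul_sq_le (fun z hz => (mul_pos ha₁ (ht z hz)).le.trans (hW₁₁ z hz).1)
      (fun z hz => (mul_pos ha₂ (ht z hz)).le.trans (hW₂₂ z hz).1) hz
      ((mul_pos ha₃ (ht z hz)).trans_le (hW₁₂ z hz).1)
  exact exists_loewner_sandwich_bivariate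
    (fun lam : EuclideanSpace ℝ (Fin d) => (1 + ‖lam‖) ^ (-(d + 1 + 2 * κ) : ℝ))
    (W₁₁ ‖·‖) (W₂₂ ‖·‖) (W₁₂ ‖·‖) hσ₁₁ hσ₂₂ hcond (fun lam => ht _ (norm_nonneg lam))
    ha₁ ha₁'.le ha₂ ha₃ (fun lam => hW₁₁ _ (norm_nonneg lam)) (fun lam => hW₂₂ _ (norm_nonneg lam))
    (fun lam => hW₁₂ _ (norm_nonneg lam)) (fun lam => hgap _ (norm_nonneg lam))

/-- Under two-sided polynomial decay bounds on the Generalized Wendland spectral densities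
and the strict infimum condition on the colocated correlation, the bivariate Generalized
Wendland spectral matrix is sandwiched, in the Loewner order, between constant multiples of
`(1+‖λ‖)^{−(d+1+2κ)} I₂`. -/
theorem stmt17 (d : ℕ) (hd : d ∈ ({1, 2, 3} : Set ℕ)) (κ μ : ℝ) (hκ : 0 ≤ κ)
    (hμ : μ > d + 1 / 2 + κ) (σ₁₁ σ₂₂ ρ₁₂ : ℝ) (hσ₁₁ : 0 < σ₁₁) (hσ₂₂ : 0 < σ₂₂)
    (W₁₁ W₂₂ W₁₂ : ℝ → ℝ)
    (hW₁₁ : ∃ c c' : ℝ, 0 < c ∧ c < c' ∧ ∀ z : ℝ, 0 ≤ z →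
      c * (1 + z) ^ (-(d + 1 + 2 * κ)) ≤ W₁₁ z ∧ W₁₁ z ≤ c' * (1 + z) ^ (-(d + 1 + 2 * κ)))
    (hW₂₂ : ∃ c c' : ℝ, 0 < c ∧ c < c' ∧ ∀ z : ℝ, 0 ≤ z →
      c * (1 + z) ^ (-(d + 1 + 2 * κ)) ≤ W₂₂ z ∧ W₂₂ z ≤ c' * (1 + z) ^ (-(d + 1 + 2 * κ)))
    (hW₁₂ : ∃ c c' : ℝ, 0 < c ∧ c < c' ∧ ∀ z : ℝ, 0 ≤ z →
      c * (1 + z) ^ (-(d + 1 + 2 * κ)) ≤ W₁₂ z ∧ W₁₂ z ≤ c' * (1 + z) ^ (-(d + 1 + 2 * κ)))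
    (hcond : ρ₁₂ ^ 2 < ⨅ z : Set.Ici (0 : ℝ),
      W₁₁ (z : ℝ) * W₂₂ (z : ℝ) / W₁₂ (z : ℝ) ^ 2) :
    ∃ c c' : ℝ, 0 < c ∧ c < c' ∧ ∀ lam : EuclideanSpace ℝ (Fin d),
      ((!![σ₁₁ * σ₁₁ * W₁₁ ‖lam‖, ρ₁₂ * σ₁₁ * σ₂₂ * W₁₂ ‖lam‖;
          ρ₁₂ * σ₁₁ * σ₂₂ * W₁₂ ‖lam‖, σ₂₂ * σ₂₂ * W₂₂ ‖lam‖] : Matrix (Fin 2) (Fin 2) ℝ) -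
        (c * (1 + ‖lam‖) ^ (-(d + 1 + 2 * κ))) • (1 : Matrix (Fin 2) (Fin 2) ℝ)).PosSemidef ∧
      ((c' * (1 + ‖lam‖) ^ (-(d + 1 + 2 * κ))) • (1 : Matrix (Fin 2) (Fin 2) ℝ) -
        !![σ₁₁ * σ₁₁ * W₁₁ ‖lam‖, ρ₁₂ * σ₁₁ * σ₂₂ * W₁₂ ‖lam‖;
          ρ₁₂ * σ₁₁ * σ₂₂ * W₁₂ ‖lam‖, σ₂₂ * σ₂₂ * W₂₂ ‖lam‖]).PosSemidef :=
  stmt17_general d κ σ₁₁ σ₂₂ ρ₁₂ hσ₁₁ hσ₂₂ W₁₁ W₂₂ W₁₂ hW₁₁ hW₂₂ hW₁₂ hcond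
end
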